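/- arXiv:1607.05010 — 2 statements merged into one kernel-verified Lean document; each statement's English description precedes it below -/
import Mathlib

section
/- Let θ_k be holomorphic automorphisms of ℂⁿ with sup_{|z|_∞ ≤ k} |θ_k(z) − z| < ε_k, where Σ_k ε_k < ∞. Set Θ_k = θ_k ∘ ... ∘ θ₁ and Ω = {z ∈ ℂⁿ : the sequence (Θ_k(z)) is bounded}. Then for every z ∈ ℂⁿ with Θ_m(z) in the open polydisk of radius m − Σ_{k>m} ε_k for some m, the point z belongs to Ω, and Θ_k(z) converges as k → ∞. -/
open Filter

/-- The composition `Θ_k = θ_k ∘ ⋯ ∘ θ_1`. -/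
def stmt16Comps {n : ℕ} (θ : ℕ → (Fin n → ℂ) → (Fin n → ℂ)) : ℕ → (Fin n → ℂ) → (Fin n → ℂ)
  | 0 => id
  | k + 1 => θ (k + 1) ∘ stmt16Comps θ k

/-- Push-out method: if each `θ_k` is `ε_k`-close to the identity on the polydisk of
radius `k` and `∑ ε_k < ∞`, then any point whose orbit reaches well inside some
polydisk has bounded orbit (lies in `Ω`) and its orbit converges. -/
theorem stmt_16 (n : ℕ) (hn : 1 ≤ n)
    (θ : ℕ → (Fin n → ℂ) → (Fin n → ℂ)) (ε : ℕ → ℝ)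
    (hθ : ∀ k, 1 ≤ k → Differentiable ℂ (θ k) ∧ Function.Bijective (θ k))
    (hεpos : ∀ k, 0 < ε k) (hεsum : Summable ε)
    (hclose : ∀ k : ℕ, 1 ≤ k → ∀ z : Fin n → ℂ, ‖z‖ ≤ (k : ℝ) → ‖θ k z - z‖ < ε k)
    (z : Fin n → ℂ) (m : ℕ) (hm : 1 ≤ m)
    (hz : ‖stmt16Comps θ m z‖ < (m : ℝ) - ∑' k : ℕ, ε (m + 1 + k)) :
    (∃ C : ℝ, ∀ k, ‖stmt16Comps θ k z‖ ≤ C) ∧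
    ∃ L : Fin n → ℂ, Tendsto (fun k => stmt16Comps θ k z) atTop (nhds L) := by
  set f : ℕ → (Fin n → ℂ) := fun k => stmt16Comps θ k z with hf
  set T : ℕ → ℝ := fun k => ∑' i, ε (k + 1 + i) with hT
  have hTs : ∀ k : ℕ, Summable (fun i => ε (k + 1 + i)) := by
    intro k
    exact ((summable_nat_add_iff (k + 1)).mpr hεsum).congr (fun i => by rw [add_comm])
  have hTnn : ∀ k, 0 ≤ T k := fun k => tsum_nonneg (fun i => (hεpos _).le)
  have hTrec : ∀ k, T k = ε (k + 1) + T (k + 1) := by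
    intro k
    have h0 := Summable.tsum_eq_zero_add (hTs k)
    simp only [hT]
    rw [h0, show k + 1 + 0 = k + 1 from rfl]
    congr 1
    apply tsum_congr
    intro i
    congr 1
    omega
  have hfsucc : ∀ k, f (k + 1) = θ (k + 1) (f k) := fun k => rfl
  have hkey : ∀ k, m ≤ k → ‖f k‖ < (k : ℝ) - T k := by
    intro k hk
    induction k, hk using Nat.le_induction with
    | base => exact hz
    | succ k hk ih =>
      have hfk : ‖f k‖ ≤ ((k + 1 : ℕ) : ℝ) := by
        have : ‖f k‖ < (k : ℝ) := lt_of_lt_of_le ih (by linarith [hTnn k])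
        push_cast; linarith
      have hcl := hclose (k + 1) (by omega) (f k) hfk
      have : ‖f (k + 1)‖ ≤ ‖f k‖ + ‖θ (k + 1) (f k) - f k‖ := by
        rw [hfsucc k]
        calc ‖θ (k + 1) (f k)‖ = ‖f k + (θ (k + 1) (f k) - f k)‖ := by ring_nf
          _ ≤ _ := norm_add_le _ _
      have hrec := hTrec k
      push_cast
      push_cast at ih
      linarith
  have hdiff : ∀ k, m ≤ k → dist (f k) (f (k + 1)) < ε (k + 1) := by
    intro k hk
    have hfk : ‖f k‖ ≤ ((k + 1 : ℕ) : ℝ) := by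
      have := hkey k hk
      have := hTnn k
      push_cast; linarith
    have hcl := hclose (k + 1) (by omega) (f k) hfk
    rw [dist_eq_norm, ← norm_neg]
    rw [hfsucc k]
    simpa using hcl
  set d : ℕ → ℝ := fun k => ε (k + 1) + (if m ≤ k then 0 else dist (f k) (f (k + 1))) with hd
  have hdsum : Summable d := by
    apply Summable.add
    · exact ((summable_nat_add_iff 1).mpr hεsum).congr (fun i => by rw [add_comm])
    · apply summable_of_ne_finset_zero (s := Finset.range m)
      intro k hk
      simp only [Finset.mem_range, not_lt] at hk
      simp [hk]
  have hdle : ∀ k, dist (f k) (f (k + 1)) ≤ d k := by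
    intro k
    by_cases hk : m ≤ k
    · simp only [hd, hk, if_pos, add_zero]
      exact (hdiff k hk).le
    · simp only [hd, if_neg hk]
      linarith [(hεpos (k + 1))]
  have hcauchy : CauchySeq f := cauchySeq_of_dist_le_of_summable d hdle hdsum
  obtain ⟨L, hL⟩ := cauchySeq_tendsto_of_complete hcauchy
  refine ⟨?_, L, hL⟩
  obtain ⟨C, hC⟩ := isBounded_iff_forall_norm_le.mp hcauchy.isBounded_range
  exact ⟨C, fun k => hC _ ⟨k, rfl⟩⟩
end

section
/- Suppose f = (x, y, z) : 𝔻 → ℂ³ is holomorphic with z' = −x·y', the image of f avoids the set K = ⋃_{N≥1} {(x,y,z) : max(|x|,|y|) = 2^{N−1}, |z| ≤ C_N} where C_N ≥ 2^{3N+1}, and f(0) lies in the open polydisk 2^{N₀}𝔻³. If N > N₀ is such that |x(ζ)| < 2^N and |y(ζ)| < 2^N for all ζ ∈ closed unit disk, then (x(ζ), y(ζ)) lies in the open bidisk 2^{N−1}𝔻² for all |ζ| ≤ 1 − 2^{−N}. -/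
open Metric

/-!
Cauchy's estimate on discs of radius `2^{-N}` bounds `y'` by `2^{2N}`, so `|z'| = |x y'| ≤ 2^{3N}`
on the disc of radius `1 - 2^{-N}`, and integrating from `0` keeps `|z|` below `2^{3N+1} ≤ C_N`
there. Avoiding `K` then means `max(|x|,|y|)` never takes the value `2^{N-1}` on this disc; it is
below that value at the centre, hence everywhere on the (connected) disc.
-/

theorem IsPreconnected.forall_lt_of_forall_ne {X α : Type*} [TopologicalSpace X] [LinearOrder α]
    [TopologicalSpace α] [OrderClosedTopology α] {s : Set X} (hs : IsPreconnected s) {f : X → α}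
    (hf : ContinuousOn f s) {a : X} (ha : a ∈ s) {t : α} (hat : f a < t)
    (hne : ∀ w ∈ s, f w ≠ t) : ∀ w ∈ s, f w < t := by
  intro w hw
  by_contra! hwt
  obtain ⟨v, hv, hvt⟩ := hs.intermediate_value ha hw hf ⟨hat.le, hwt⟩
  exact hne v hv hvt

theorem Complex.norm_deriv_le_div_of_forall_norm_le {E : Type*} [NormedAddCommGroup E]
    [NormedSpace ℂ E] {f : ℂ → E} {c w : ℂ} {R δ B : ℝ}
    (hf : DifferentiableOn ℂ f (closedBall c R)) (hB : ∀ u ∈ closedBall c R, ‖f u‖ ≤ B)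
    (hδ : 0 < δ) (hw : w ∈ closedBall c (R - δ)) : ‖deriv f w‖ ≤ B / δ := by
  have hsub : closedBall w δ ⊆ closedBall c R :=
    closedBall_subset_closedBall' (by linarith [mem_closedBall.mp hw])
  exact Complex.norm_deriv_le_of_forall_mem_sphere_norm_le hδ (hf.diffContOnCl_ball hsub)
    fun u hu => hB u (hsub (sphere_subset_closedBall hu))

theorem norm_sub_le_of_deriv_eq_neg_mul {x y z : ℂ → ℂ} {B δ : ℝ} (hδ : 0 < δ)
    (hy : DifferentiableOn ℂ y (closedBall 0 1)) (hz : DifferentiableOn ℂ z (closedBall 0 1))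
    (hhor : ∀ ζ ∈ ball (0:ℂ) 1, deriv z ζ = -(x ζ * deriv y ζ))
    (hxb : ∀ ζ ∈ closedBall (0:ℂ) 1, ‖x ζ‖ ≤ B) (hyb : ∀ ζ ∈ closedBall (0:ℂ) 1, ‖y ζ‖ ≤ B)
    {w : ℂ} (hw : w ∈ closedBall (0:ℂ) (1 - δ)) : ‖z w - z 0‖ ≤ B * (B / δ) := by
  have hsub : closedBall (0:ℂ) (1 - δ) ⊆ ball 0 1 := closedBall_subset_ball (by linarith)
  have hB : 0 ≤ B := (norm_nonneg _).trans (hxb 0 (mem_closedBall_self zero_le_one))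
  have hdiff : ∀ u ∈ closedBall (0:ℂ) (1 - δ), DifferentiableAt ℂ z u := fun u hu =>
    hz.differentiableAt (closedBall_mem_nhds_of_mem (hsub hu))
  have hderiv : ∀ u ∈ closedBall (0:ℂ) (1 - δ), ‖deriv z u‖ ≤ B * (B / δ) := by
    intro u hu
    rw [hhor u (hsub hu), norm_neg, norm_mul]
    exact mul_le_mul (hxb u (ball_subset_closedBall (hsub hu)))
      (Complex.norm_deriv_le_div_of_forall_norm_le hy hyb hδ hu) (norm_nonneg _) hB
  have hw1 : ‖w - 0‖ ≤ 1 := by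
    rw [sub_zero]; linarith [mem_closedBall_zero_iff.mp hw]
  calc ‖z w - z 0‖ ≤ B * (B / δ) * ‖w - 0‖ :=
        (convex_closedBall 0 _).norm_image_sub_le_of_norm_deriv_le hdiff hderiv
          (mem_closedBall_self (by linarith [mem_closedBall_zero_iff.mp hw, norm_nonneg w])) hw
    _ ≤ B * (B / δ) := mul_le_of_le_one_right (by positivity) hw1

theorem stmt_19_general (x y z : ℂ → ℂ) (CN : ℕ → ℝ) (N₀ N : ℕ)
    (hN : N₀ < N)
    (hCN : ∀ M : ℕ, 1 ≤ M → (2:ℝ)^(3*M+1) ≤ CN M)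
    (hx : DifferentiableOn ℂ x (closedBall 0 1))
    (hy : DifferentiableOn ℂ y (closedBall 0 1))
    (hz : DifferentiableOn ℂ z (closedBall 0 1))
    (hhor : ∀ ζ ∈ ball (0:ℂ) 1, deriv z ζ = -(x ζ * deriv y ζ))
    (havoid : ∀ ζ ∈ closedBall (0:ℂ) 1,
      ¬ ∃ M : ℕ, 1 ≤ M ∧ max ‖x ζ‖ ‖y ζ‖ = (2:ℝ)^(M-1) ∧ ‖z ζ‖ ≤ CN M)
    (h0 : ‖x 0‖ < 2^N₀ ∧ ‖y 0‖ < 2^N₀ ∧ ‖z 0‖ < 2^N₀)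
    (hxb : ∀ ζ ∈ closedBall (0:ℂ) 1, ‖x ζ‖ < 2^N)
    (hyb : ∀ ζ ∈ closedBall (0:ℂ) 1, ‖y ζ‖ < 2^N) :
    ∀ ζ : ℂ, ‖ζ‖ ≤ 1 - (2:ℝ)^(-(N:ℤ)) →
      ‖x ζ‖ < (2:ℝ)^(N-1) ∧ ‖y ζ‖ < (2:ℝ)^(N-1) := by
  obtain ⟨hx0, hy0, hz0⟩ := h0
  set s := closedBall (0:ℂ) (1 - (2:ℝ)^(-(N:ℤ)))
  have hs1 : s ⊆ closedBall 0 1 := closedBall_subset_closedBall (by simp)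
  have hzs : ∀ w ∈ s, ‖z w‖ < CN N := by
    intro w hw
    have hzw := norm_sub_le_of_deriv_eq_neg_mul (by positivity) hy hz hhor
      (fun ζ hζ => (hxb ζ hζ).le) (fun ζ hζ => (hyb ζ hζ).le) hw
    have hpow : (2:ℝ)^N * ((2:ℝ)^N / (2:ℝ)^(-(N:ℤ))) = 2^(3*N) := by
      rw [zpow_neg, zpow_natCast, div_inv_eq_mul]; ring
    have hN₀ : (2:ℝ)^N₀ ≤ 2^(3*N) := pow_le_pow_right₀ one_le_two (by omega)
    calc ‖z w‖ ≤ ‖z 0‖ + ‖z w - z 0‖ := norm_le_insert' _ _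
      _ < 2^(3*N+1) := by rw [pow_succ]; linarith
      _ ≤ CN N := hCN N (by omega)
  have hne : ∀ w ∈ s, max ‖x w‖ ‖y w‖ ≠ (2:ℝ)^(N-1) := fun w hw hmax =>
    havoid w (hs1 hw) ⟨N, by omega, hmax, (hzs w hw).le⟩
  have hcenter : max ‖x 0‖ ‖y 0‖ < (2:ℝ)^(N-1) :=
    (max_lt hx0 hy0).trans_le (pow_le_pow_right₀ one_le_two (by omega))
  have h0s : (0:ℂ) ∈ s :=
    mem_closedBall_self (sub_nonneg.mpr (zpow_le_one_of_nonpos₀ one_le_two (by simp)))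
  intro ζ hζ
  exact max_lt_iff.mp <| (convex_closedBall _ _).isPreconnected.forall_lt_of_forall_ne
    ((hx.continuousOn.mono hs1).norm.sup (hy.continuousOn.mono hs1).norm) h0s hcenter hne ζ
    (mem_closedBall_zero_iff.mpr hζ)

/-- The shrinking step of Lemma 2.1: a horizontal holomorphic disk avoiding the union
of cylinders `K`, centered in `2^{N₀}𝔻³`, with `|x|,|y| < 2^N` on the closed unit disk,
satisfies `(x(ζ),y(ζ)) ∈ 2^{N−1}𝔻²` for `|ζ| ≤ 1 − 2^{−N}`. -/
theorem stmt_19 (x y z : ℂ → ℂ) (CN : ℕ → ℝ) (N₀ N : ℕ)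
    (hN₀ : 1 ≤ N₀) (hN : N₀ < N)
    (hCN : ∀ M : ℕ, 1 ≤ M → (2:ℝ)^(3*M+1) ≤ CN M)
    (hx : DifferentiableOn ℂ x (closedBall 0 1))
    (hy : DifferentiableOn ℂ y (closedBall 0 1))
    (hz : DifferentiableOn ℂ z (closedBall 0 1))
    (hhor : ∀ ζ ∈ ball (0:ℂ) 1, deriv z ζ = -(x ζ * deriv y ζ))
    (havoid : ∀ ζ ∈ closedBall (0:ℂ) 1,
      ¬ ∃ M : ℕ, 1 ≤ M ∧ max ‖x ζ‖ ‖y ζ‖ = (2:ℝ)^(M-1) ∧ ‖z ζ‖ ≤ CN M)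
    (h0 : ‖x 0‖ < 2^N₀ ∧ ‖y 0‖ < 2^N₀ ∧ ‖z 0‖ < 2^N₀)
    (hxb : ∀ ζ ∈ closedBall (0:ℂ) 1, ‖x ζ‖ < 2^N)
    (hyb : ∀ ζ ∈ closedBall (0:ℂ) 1, ‖y ζ‖ < 2^N) :
    ∀ ζ : ℂ, ‖ζ‖ ≤ 1 - (2:ℝ)^(-(N:ℤ)) →
      ‖x ζ‖ < (2:ℝ)^(N-1) ∧ ‖y ζ‖ < (2:ℝ)^(N-1) :=
  stmt_19_general x y z CN N₀ N hN hCN hx hy hz hhor havoid h0 hxb hyb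
end
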